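/- If ℓ ≥ 2 trees are attached to ℓ distinguishable leaves of a fixed host tree, with the attached trees being ℓ pairwise distinct trees each having the same number of nodes, then the ℓ! resulting composite trees are pairwise distinct and all have the same path length. Consequently the number of t-ary trees with that path length is at least ℓ!. -/

import Mathlib

/-!
Replacing the subtree at a position `p` by `τ` changes the path length by the difference of the
contributions `pathLength + |p| * size` of the new and the old subtree. At pairwise
prefix-incomparable positions these replacements do not interact, so attaching trees of a common
size `q` at leaves adds `∑ pathLength τᵢ + (q - 1) ∑ |posᵢ|`, whatever the order. The composite
still shows which tree sits at which leaf, so distinct orders give distinct trees; and only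
finitely many trees have a given path length, since a tree has at most one node more than its
path length.
-/

/-- A `t`-ary tree: either empty, or a root node with `t` ordered subtrees. -/
inductive TAry (t : ℕ) : Type where
  | nil : TAry t
  | node : (Fin t → TAry t) → TAry t

namespace TAry

variable {t : ℕ}

/-- Number of nodes of a `t`-ary tree. -/
def size : TAry t → ℕ
  | nil => 0
  | node c => 1 + ∑ i, (c i).size

/-- Sum over nodes of `d +` (depth of the node). -/
def plFrom : TAry t → ℕ → ℕ
  | nil, _ => 0
  | node c, d => d + ∑ i, (c i).plFrom (d + 1)

/-- Path length: the sum of the depths of all nodes. -/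
def pathLength (T : TAry t) : ℕ := T.plFrom 0

/-- Number of nodes at depth `j` (the profile `D_j`). -/
def depthCount : ℕ → TAry t → ℕ
  | _, nil => 0
  | 0, node _ => 1
  | j + 1, node c => ∑ i, depthCount j (c i)

/-- Number of leaves (nodes all of whose subtrees are empty). -/
def leaves : TAry t → ℕ
  | nil => 0
  | node c => max 1 (∑ i, (c i).leaves)

end TAry

namespace TAry
variable {t : ℕ}

/-- Every internal (non-leaf) node has exactly one child. -/
def chain : TAry t → Prop
  | nil => True
  | node c => (∀ i, c i = nil) ∨ ∃ i, c i ≠ nil ∧ chain (c i) ∧ ∀ j, j ≠ i → c j = nil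

/-- Number of leaves at depth `j`. -/
def leavesAt : ℕ → TAry t → ℕ
  | _, nil => 0
  | 0, node c => if (∑ i, (c i).size) = 0 then 1 else 0
  | j + 1, node c => ∑ i, leavesAt j (c i)

/-- The subtree of `T` at position `pos` (empty tree if the position is invalid). -/
def getAt : TAry t → List (Fin t) → TAry t
  | T, [] => T
  | nil, _ :: _ => nil
  | node c, i :: rest => getAt (c i) rest

/-- Replace the subtree of `T` at position `pos` by `τ`. -/
def replaceAt : TAry t → List (Fin t) → TAry t → TAry t
  | _, [], τ => τ
  | nil, _ :: _, _ => nil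
  | node c, i :: rest, τ => node (fun j => if j = i then replaceAt (c i) rest τ else c j)

/-- Attach the trees `τs i` at the positions `pos i`, for `i = 0, …, ℓ-1`. -/
def attachAll {ℓ : ℕ} (T : TAry t) (pos : Fin ℓ → List (Fin t)) (τs : Fin ℓ → TAry t) :
    TAry t :=
  (List.finRange ℓ).foldl (fun A i => replaceAt A (pos i) (τs i)) T

end TAry

/-- The binary entropy function (natural logarithm). -/
noncomputable def binEnt (x : ℝ) : ℝ := -x * Real.log x - (1 - x) * Real.log (1 - x)

/-- Number of `t`-ary trees with exactly `n` nodes. -/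
noncomputable def Ct (t n : ℕ) : ℕ := Nat.card {T : TAry t // T.size = n}

/-- Number of `t`-ary trees with path length exactly `p`. -/
noncomputable def Tt (t p : ℕ) : ℕ := Nat.card {T : TAry t // T.pathLength = p}

namespace TAry

variable {t : ℕ}

theorem plFrom_eq_pathLength_add_mul (T : TAry t) (d : ℕ) :
    T.plFrom d = T.pathLength + d * T.size := by
  induction T generalizing d with
  | nil => simp [plFrom, pathLength, size]
  | node c ih =>
    rw [pathLength, plFrom, plFrom]
    simp only [ih, size, Finset.sum_add_distrib, add_mul, one_mul, ← Finset.mul_sum]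
    ring

theorem pathLength_node (c : Fin t → TAry t) :
    (node c).pathLength = ∑ i, ((c i).pathLength + (c i).size) := by
  rw [pathLength, plFrom]
  simp only [plFrom_eq_pathLength_add_mul, zero_add, one_mul]

theorem size_le_pathLength_add_one (T : TAry t) : T.size ≤ T.pathLength + 1 := by
  cases T with
  | nil => simp [size]
  | node c =>
    rw [size, pathLength_node, Finset.sum_add_distrib]
    omega

theorem finite_setOf_size_le (n : ℕ) : {T : TAry t | T.size ≤ n}.Finite := by
  induction n with
  | zero =>
    refine (Set.finite_singleton nil).subset fun T hT => ?_
    cases T with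
    | nil => rfl
    | node c => simp [size] at hT
  | succ n ih =>
    refine ((Set.Finite.pi fun _ => ih).image node).insert nil |>.subset fun T hT => ?_
    cases T with
    | nil => exact Set.mem_insert _ _
    | node c =>
      refine Set.mem_insert_of_mem _ ⟨c, fun i _ => ?_, rfl⟩
      have hci : (c i).size ≤ ∑ j, (c j).size :=
        Finset.single_le_sum (fun j _ => Nat.zero_le (c j).size) (Finset.mem_univ i)
      have hT : 1 + ∑ j, (c j).size ≤ n + 1 := hT
      show (c i).size ≤ n
      omega

theorem finite_setOf_pathLength_eq (P : ℕ) : {T : TAry t | T.pathLength = P}.Finite :=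
  (finite_setOf_size_le (P + 1)).subset fun T hT =>
    (hT : T.pathLength = P) ▸ size_le_pathLength_add_one T

theorem nil_getAt (p : List (Fin t)) : getAt nil p = nil := by
  cases p <;> rfl

@[simp] theorem getAt_nil (T : TAry t) : getAt T [] = T := by
  cases T <;> rfl

@[simp] theorem replaceAt_nil (T τ : TAry t) : replaceAt T [] τ = τ := by
  cases T <;> rfl

theorem getAt_append (T : TAry t) (p s : List (Fin t)) :
    getAt T (p ++ s) = getAt (getAt T p) s := by
  induction p generalizing T with
  | nil => cases T <;> rfl
  | cons i p ih =>
    cases T with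
    | nil => simp [getAt, nil_getAt]
    | node c => exact ih (c i)

def Incomparable (p p' : List (Fin t)) : Prop := ¬ p <+: p' ∧ ¬ p' <+: p

theorem Incomparable.symm {p p' : List (Fin t)} (h : Incomparable p p') : Incomparable p' p :=
  ⟨h.2, h.1⟩

theorem eq_of_prefix_of_getAt_eq_leaf {T : TAry t} {p p' : List (Fin t)}
    (hp : getAt T p = node fun _ => nil) (hp' : getAt T p' ≠ nil) (h : p <+: p') : p = p' := by
  obtain ⟨s, rfl⟩ := h
  cases s with
  | nil => exact (List.append_nil p).symm
  | cons k s => simp [getAt_append, hp, getAt, nil_getAt] at hp'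

theorem incomparable_of_getAt_eq_leaf {T : TAry t} {p p' : List (Fin t)}
    (hp : getAt T p = node fun _ => nil) (hp' : getAt T p' = node fun _ => nil) (hne : p ≠ p') :
    Incomparable p p' :=
  ⟨fun h => hne (eq_of_prefix_of_getAt_eq_leaf hp (by simp [hp']) h),
    fun h => hne (eq_of_prefix_of_getAt_eq_leaf hp' (by simp [hp]) h).symm⟩

theorem getAt_replaceAt_self (T τ : TAry t) {p : List (Fin t)} (h : getAt T p ≠ nil) :
    getAt (replaceAt T p τ) p = τ := by
  induction p generalizing T with
  | nil => simp
  | cons i p ih =>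
    cases T with
    | nil => exact absurd (nil_getAt _) h
    | node c =>
      simp only [replaceAt, getAt]
      exact ih (c i) h

theorem getAt_replaceAt_of_incomparable (T τ : TAry t) {p p' : List (Fin t)}
    (h : Incomparable p p') : getAt (replaceAt T p τ) p' = getAt T p' := by
  induction p generalizing T p' with
  | nil => exact absurd List.nil_prefix h.1
  | cons i p ih =>
    cases p' with
    | nil => exact absurd List.nil_prefix h.2
    | cons i' p' =>
      cases T with
      | nil => rfl
      | node c =>
        by_cases hi : i' = i
        · subst hi
          simp only [replaceAt, getAt]
          exact ih (c i') ⟨fun hp => h.1 (List.prefix_cons_inj i' |>.mpr hp),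
            fun hp => h.2 (List.prefix_cons_inj i' |>.mpr hp)⟩
        · simp only [replaceAt, getAt, if_neg hi]

theorem plFrom_replaceAt (T τ : TAry t) {p : List (Fin t)} (d : ℕ) (h : getAt T p ≠ nil) :
    (replaceAt T p τ).plFrom d + (getAt T p).plFrom (d + p.length) =
      T.plFrom d + τ.plFrom (d + p.length) := by
  induction p generalizing T d with
  | nil => simp [add_comm]
  | cons i p ih =>
    cases T with
    | nil => exact absurd (nil_getAt _) h
    | node c =>
      have hi := ih (c i) (d + 1) h
      rw [add_right_comm] at hi
      simp only [replaceAt, getAt, plFrom, List.length_cons, ← add_assoc]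
      have hrest : ∑ j ∈ Finset.univ.erase i,
            (if j = i then replaceAt (c i) p τ else c j).plFrom (d + 1) =
          ∑ j ∈ Finset.univ.erase i, (c j).plFrom (d + 1) :=
        Finset.sum_congr rfl fun j hj => by rw [if_neg (Finset.ne_of_mem_erase hj)]
      rw [← Finset.add_sum_erase _ _ (Finset.mem_univ i),
        ← Finset.add_sum_erase _ _ (Finset.mem_univ i), if_pos rfl, hrest]
      omega

theorem pathLength_replaceAt (T τ : TAry t) {p : List (Fin t)} (h : getAt T p ≠ nil) :
    (replaceAt T p τ).pathLength + (getAt T p).plFrom p.length =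
      T.pathLength + τ.plFrom p.length := by
  simpa only [zero_add, pathLength] using plFrom_replaceAt T τ 0 h

section attachList

variable {ι : Type*} (pos : ι → List (Fin t)) (τ : ι → TAry t)

def attachList (A : TAry t) (L : List ι) : TAry t :=
  L.foldl (fun B i => replaceAt B (pos i) (τ i)) A

theorem getAt_attachList_of_incomparable (A : TAry t) (L : List ι) {p : List (Fin t)}
    (hL : ∀ i ∈ L, Incomparable (pos i) p) : getAt (attachList pos τ A L) p = getAt A p := by
  induction L generalizing A with
  | nil => rfl
  | cons i L ih =>
    rw [attachList, List.foldl_cons, ← attachList,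
      ih _ fun j hj => hL j (List.mem_cons_of_mem i hj),
      getAt_replaceAt_of_incomparable _ _ (hL i List.mem_cons_self)]

variable {pos}

theorem getAt_attachList_of_mem {A : TAry t} {L : List ι}
    (hL : L.Pairwise fun i j => Incomparable (pos i) (pos j)) {j : ι} (hj : j ∈ L)
    (hA : getAt A (pos j) ≠ nil) : getAt (attachList pos τ A L) (pos j) = τ j := by
  induction L generalizing A with
  | nil => exact absurd hj List.not_mem_nil
  | cons i L ih =>
    rw [List.pairwise_cons] at hL
    rw [attachList, List.foldl_cons, ← attachList]
    rcases List.mem_cons.mp hj with rfl | hj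
    · rw [getAt_attachList_of_incomparable _ _ _ _ fun k hk => (hL.1 k hk).symm,
        getAt_replaceAt_self _ _ hA]
    · refine ih hL.2 hj ?_
      rwa [getAt_replaceAt_of_incomparable _ _ (hL.1 j hj)]

theorem pathLength_attachList {A : TAry t} {L : List ι}
    (hL : L.Pairwise fun i j => Incomparable (pos i) (pos j))
    (hA : ∀ i ∈ L, getAt A (pos i) ≠ nil) :
    (attachList pos τ A L).pathLength +
        (L.map fun i => (getAt A (pos i)).plFrom (pos i).length).sum =
      A.pathLength + (L.map fun i => (τ i).plFrom (pos i).length).sum := by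
  induction L generalizing A with
  | nil => rfl
  | cons i L ih =>
    rw [List.pairwise_cons] at hL
    have hA' : ∀ j ∈ L, getAt (replaceAt A (pos i) (τ i)) (pos j) = getAt A (pos j) :=
      fun j hj => getAt_replaceAt_of_incomparable _ _ (hL.1 j hj)
    have step := pathLength_replaceAt A (τ i) (hA i List.mem_cons_self)
    have rest := ih hL.2 fun j hj => hA' j hj ▸ hA j (List.mem_cons_of_mem i hj)
    rw [List.map_congr_left fun j hj => by rw [hA' j hj]] at rest
    rw [attachList, List.foldl_cons, ← attachList]
    simp only [List.map_cons, List.sum_cons]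
    omega

end attachList

theorem sum_plFrom_comp_perm {ι : Type*} [Fintype ι] {τ : ι → TAry t} {q : ℕ}
    (hτ : ∀ i, (τ i).size = q) (π : Equiv.Perm ι) (d : ι → ℕ) :
    ∑ i, (τ (π i)).plFrom (d i) = ∑ i, (τ i).plFrom (d i) := by
  simp only [plFrom_eq_pathLength_add_mul, hτ, Finset.sum_add_distrib,
    Equiv.sum_comp π fun i => (τ i).pathLength]

end TAry

theorem stmt18_general (t ℓ q : ℕ)
    (T : TAry t) (pos : Fin ℓ → List (Fin t)) (hposinj : Function.Injective pos)
    (hleaf : ∀ i, TAry.getAt T (pos i) = TAry.node (fun _ => TAry.nil))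
    (τs : Fin ℓ → TAry t) (hτinj : Function.Injective τs)
    (hτq : ∀ i, (τs i).size = q) :
    (∀ π σ : Equiv.Perm (Fin ℓ),
      (TAry.attachAll T pos (τs ∘ π)).pathLength =
        (TAry.attachAll T pos (τs ∘ σ)).pathLength) ∧
    (∀ π σ : Equiv.Perm (Fin ℓ),
      TAry.attachAll T pos (τs ∘ π) = TAry.attachAll T pos (τs ∘ σ) → π = σ) ∧
    Nat.factorial ℓ ≤
      Nat.card {T' : TAry t // T'.pathLength = (TAry.attachAll T pos τs).pathLength} := by
  have hinc : (List.finRange ℓ).Pairwise fun i j => TAry.Incomparable (pos i) (pos j) :=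
    (List.nodup_finRange ℓ).pairwise_of_forall_ne fun i _ j _ hij =>
      TAry.incomparable_of_getAt_eq_leaf (hleaf i) (hleaf j) (hposinj.ne hij)
  have hvalid : ∀ i ∈ List.finRange ℓ, TAry.getAt T (pos i) ≠ TAry.nil := fun i _ => by
    simp [hleaf i]
  have hpl (π : Equiv.Perm (Fin ℓ)) :
      (TAry.attachAll T pos (τs ∘ π)).pathLength = (TAry.attachAll T pos τs).pathLength := by
    have h₁ := TAry.pathLength_attachList (τs ∘ π) hinc hvalid
    have h₂ := TAry.pathLength_attachList τs hinc hvalid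
    simp only [← Fin.sum_univ_def, Function.comp_apply, TAry.sum_plFrom_comp_perm hτq]
      at h₁ h₂
    change (TAry.attachList pos (τs ∘ π) T _).pathLength =
      (TAry.attachList pos τs T _).pathLength
    omega
  have hinj (π σ : Equiv.Perm (Fin ℓ))
      (h : TAry.attachAll T pos (τs ∘ π) = TAry.attachAll T pos (τs ∘ σ)) : π = σ := by
    have hget (f : Fin ℓ → TAry t) (j : Fin ℓ) :
        TAry.getAt (TAry.attachAll T pos f) (pos j) = f j :=
      TAry.getAt_attachList_of_mem f hinc (List.mem_finRange j) (hvalid j (List.mem_finRange j))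
    exact Equiv.ext fun j => hτinj <| by
      simpa only [hget, Function.comp_apply] using congrArg (TAry.getAt · (pos j)) h
  refine ⟨fun π σ => (hpl π).trans (hpl σ).symm, hinj, ?_⟩
  have : Finite {T' : TAry t // T'.pathLength = (TAry.attachAll T pos τs).pathLength} :=
    (TAry.finite_setOf_pathLength_eq _).to_subtype
  calc ℓ.factorial = Nat.card (Equiv.Perm (Fin ℓ)) := by simp [Fintype.card_perm]
    _ ≤ _ := Nat.card_le_card_of_injective (fun π => ⟨_, hpl π⟩)
      fun π σ h => hinj π σ (congrArg Subtype.val h)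

/-- Attaching `ℓ` pairwise distinct trees of equal size to `ℓ` distinct leaves of a host
tree in the `ℓ!` possible orders yields pairwise distinct trees, all of the same path
length; hence the number of `t`-ary trees with that path length is at least `ℓ!`. -/
theorem stmt18 (t ℓ q : ℕ) (ht : 2 ≤ t) (hℓ : 2 ≤ ℓ) (hq : 1 ≤ q)
    (T : TAry t) (pos : Fin ℓ → List (Fin t)) (hposinj : Function.Injective pos)
    (hleaf : ∀ i, TAry.getAt T (pos i) = TAry.node (fun _ => TAry.nil))
    (τs : Fin ℓ → TAry t) (hτinj : Function.Injective τs)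
    (hτq : ∀ i, (τs i).size = q) :
    (∀ π σ : Equiv.Perm (Fin ℓ),
      (TAry.attachAll T pos (τs ∘ π)).pathLength =
        (TAry.attachAll T pos (τs ∘ σ)).pathLength) ∧
    (∀ π σ : Equiv.Perm (Fin ℓ),
      TAry.attachAll T pos (τs ∘ π) = TAry.attachAll T pos (τs ∘ σ) → π = σ) ∧
    Nat.factorial ℓ ≤
      Nat.card {T' : TAry t // T'.pathLength = (TAry.attachAll T pos τs).pathLength} :=
  stmt18_general t ℓ q T pos hposinj hleaf τs hτinj hτq
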